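/- With x and z as in the quasi-dyadic construction, the GRS code GRS_r(x, z) is quasi-dyadic of order 2^γ: for each b ∈ G, the induced coordinate permutation σ_b maps GRS_r(x,z) to itself. -/

import Mathlib

/-! Translating the support by `b` is undone by replacing `f` with its Taylor shift `f(X + b)`,
which has the same degree; since `b ∈ G` the translation stays inside each block `τ_i + G`,
so the multiplier `y_i` is unchanged. -/

open Polynomial

/-- The generalized Reed-Solomon code, over an arbitrary finite coordinate set. -/
def GRS {F : Type*} [Field F] {ι : Type*} [Fintype ι] (k : ℕ) (x y : ι → F) :
    Set (ι → F) :=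
  {v | ∃ f : F[X], f.degree < k ∧ ∀ i, v i = y i * f.eval (x i)}

theorem GRS.comp_mem_of_translate {F ι : Type*} [Field F] [Fintype ι] {k : ℕ} {x y : ι → F}
    {π : ι → ι} {b : F} (hx : ∀ i, x (π i) = x i + b) (hy : ∀ i, y (π i) = y i)
    {c : ι → F} (hc : c ∈ GRS k x y) : c ∘ π ∈ GRS k x y := by
  obtain ⟨f, hdeg, hcf⟩ := hc
  refine ⟨taylor b f, by rwa [degree_taylor], fun i => ?_⟩
  rw [Function.comp_apply, hcf, hx, hy, taylor_eval]

theorem grs_quasi_dyadic_general {F : Type*} [Field F]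
    (γ n₀ : ℕ)
    (G : AddSubgroup F)
    (g : Fin (2 ^ γ) ≃ G)
    (τ : Fin n₀ → F)
    (hτ : ∀ (i i' : Fin n₀) (a b : G), τ i + (a : F) = τ i' + (b : F) → i = i')
    (y : Fin n₀ → F) (r : ℕ)
    (b : F) (hb : b ∈ G) (σ : Equiv.Perm (Fin n₀ × Fin (2 ^ γ)))
    (hσ : ∀ p, τ (σ p).1 + (g (σ p).2 : F) = (τ p.1 + (g p.2 : F)) + b) :
    ∀ c ∈ GRS r (fun p : Fin n₀ × Fin (2 ^ γ) => τ p.1 + (g p.2 : F))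
        (fun p => y p.1),
      (fun p => c (σ p)) ∈ GRS r (fun p : Fin n₀ × Fin (2 ^ γ) => τ p.1 + (g p.2 : F))
        (fun p => y p.1) := by
  intro c hc
  have hblock : ∀ p, (σ p).1 = p.1 := fun p =>
    hτ _ _ (g (σ p).2) ⟨_, G.add_mem (g p.2).2 hb⟩ (by rw [hσ p, add_assoc])
  exact GRS.comp_mem_of_translate hσ (fun p => by rw [hblock p]) hc

/-- With the quasi-dyadic support `x(i,j) = τ_i + g_j` and multiplier `z(i,j) = y_i`,
the code `GRS_r(x,z)` is quasi-dyadic: it is invariant under the coordinate permutation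
`σ_b` induced by translation by any `b ∈ G`. -/
theorem grs_quasi_dyadic {F : Type*} [Field F] [CharP F 2]
    (q s : ℕ) (hq : q = 2 ^ s) (γ n₀ : ℕ)
    (G : AddSubgroup F) (hGcard : Nat.card G = 2 ^ γ)
    (g : Fin (2 ^ γ) ≃ G)
    (τ : Fin n₀ → F)
    (hτ : ∀ (i i' : Fin n₀) (a b : G), τ i + (a : F) = τ i' + (b : F) → i = i')
    (y : Fin n₀ → F) (hy : ∀ i, y i ≠ 0) (r : ℕ)
    (b : F) (hb : b ∈ G) (σ : Equiv.Perm (Fin n₀ × Fin (2 ^ γ)))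
    (hσ : ∀ p, τ (σ p).1 + (g (σ p).2 : F) = (τ p.1 + (g p.2 : F)) + b) :
    ∀ c ∈ GRS r (fun p : Fin n₀ × Fin (2 ^ γ) => τ p.1 + (g p.2 : F))
        (fun p => y p.1),
      (fun p => c (σ p)) ∈ GRS r (fun p : Fin n₀ × Fin (2 ^ γ) => τ p.1 + (g p.2 : F))
        (fun p => y p.1) :=
  grs_quasi_dyadic_general γ n₀ G g τ hτ y r b hb σ hσ
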